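/- arXiv:2401.16628 — 5 statements merged into one kernel-verified Lean document; each statement's English description precedes it below -/
import Mathlib

section
/- For all integers N > 1, K > 1, and M with 1 ≤ M ≤ K−1, the rate R satisfies R ≥ R*, where R := (N−1)/(N − P_0) with P_0 := (1 + ∑_{k=1}^{g−1} r_k (N−1)^k)^{−1}, and R* := (N^g − N^{g−1})/(N^g − 1). -/
open Finset

/-- `g := ⌈K/(M+1)⌉`, the ceiling of the exact rational quotient `K/(M+1)`. -/
def gVal (K M : ℕ) : ℕ := ⌈(K : ℚ) / (M + 1)⌉₊

/-- `r_k := ∏_{j=1}^{k} (K/(M+1) − j)/j` as a rational number. -/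
def rVal (K M : ℕ) (k : ℕ) : ℚ :=
  ∏ j ∈ Finset.Icc 1 k, ((K : ℚ) / (M + 1) - (j : ℚ)) / (j : ℚ)

/-- `P_0 := (1 + ∑_{k=1}^{g−1} r_k (N−1)^k)⁻¹`. -/
def P0Val (N K M : ℕ) : ℚ :=
  (1 + ∑ k ∈ Finset.Icc 1 (gVal K M - 1), rVal K M k * ((N : ℚ) - 1) ^ k)⁻¹

/-- `R := (N−1)/(N − P_0)`. -/
def RVal (N K M : ℕ) : ℚ := ((N : ℚ) - 1) / ((N : ℚ) - P0Val N K M)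

/-- `R* := (N^g − N^{g−1})/(N^g − 1)`. -/
def RstarVal (N K M : ℕ) : ℚ :=
  ((N : ℚ) ^ gVal K M - (N : ℚ) ^ (gVal K M - 1)) / ((N : ℚ) ^ gVal K M - 1)

/-- `R ≥ R*` for all admissible `N, K, M`. -/
theorem rate_ge_Rstar (N K M : ℕ) (hN : 1 < N) (hK : 1 < K)
    (hM1 : 1 ≤ M) (hM2 : M ≤ K - 1) :
    RVal N K M ≥ RstarVal N K M := by
  have hKQ : (0:ℚ) < K := by exact_mod_cast Nat.lt_of_lt_of_le Nat.zero_lt_one hK.le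
  have hxpos : (0:ℚ) < (K:ℚ)/(M+1) := div_pos hKQ (by positivity)
  set x : ℚ := (K:ℚ)/(M+1) with hxdef
  have hg : gVal K M = ⌈x⌉₊ := rfl
  set g := gVal K M with hgdef
  have hg1 : 1 ≤ g := by rw [hg]; exact Nat.ceil_pos.mpr hxpos
  have hxle : x ≤ (g:ℚ) := by rw [hg]; exact Nat.le_ceil x
  have hlt : ∀ j : ℕ, j < g → (j:ℚ) < x := by
    intro j hj
    exact Nat.lt_ceil.mp (hg ▸ hj)
  have hNQ : (2:ℚ) ≤ (N:ℚ) := by exact_mod_cast hN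
  -- positivity of r_k
  have rpos : ∀ k, k ≤ g - 1 → 0 < rVal K M k := by
    intro k hk
    unfold rVal
    rw [← hxdef]
    apply Finset.prod_pos
    intro j hj
    rw [Finset.mem_Icc] at hj
    have hjg : j < g := by omega
    have h1 : (j:ℚ) < x := hlt j hjg
    have h2 : (0:ℚ) < j := by exact_mod_cast hj.1
    exact div_pos (by linarith) h2
  -- bound r_k ≤ choose (g-1) k
  have rbound : ∀ k, k ≤ g - 1 → rVal K M k ≤ ((g-1).choose k : ℚ) := by
    intro k
    induction k with
    | zero => intro _; simp [rVal]
    | succ k ih =>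
      intro hk
      have hk' : k ≤ g - 1 := by omega
      have hrk := ih hk'
      have hrknn : 0 ≤ rVal K M k := (rpos k hk').le
      have hstep : rVal K M (k+1) = rVal K M k * ((x - ((k:ℚ)+1))/((k:ℚ)+1)) := by
        unfold rVal
        rw [← hxdef, Finset.prod_Icc_succ_top (by omega : 1 ≤ k+1)]
        push_cast
        ring
      have hk1pos : (0:ℚ) < (k:ℚ)+1 := by positivity
      have hcast : (((g-1) - k : ℕ):ℚ) = (g:ℚ) - 1 - (k:ℚ) := by
        rw [Nat.cast_sub (by omega : k ≤ g - 1), Nat.cast_sub hg1]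
        push_cast; ring
      have hfnn : 0 ≤ (x - ((k:ℚ)+1))/((k:ℚ)+1) := by
        have h3 : ((k+1 : ℕ):ℚ) < x := hlt (k+1) (by omega)
        push_cast at h3
        apply div_nonneg (by linarith) (by linarith)
      have hfle : (x - ((k:ℚ)+1))/((k:ℚ)+1) ≤ ((g:ℚ)-1-(k:ℚ))/((k:ℚ)+1) := by
        apply (div_le_div_iff_of_pos_right hk1pos).mpr
        linarith
      have hchooseQ : ((g-1).choose (k+1) : ℚ)
          = ((g-1).choose k : ℚ) * (((g:ℚ)-1-(k:ℚ))/((k:ℚ)+1)) := by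
        have h := Nat.choose_succ_right_eq (g-1) k
        have hq : ((g-1).choose (k+1) : ℚ) * ((k:ℚ)+1)
            = ((g-1).choose k : ℚ) * ((g:ℚ)-1-(k:ℚ)) := by
          rw [← hcast]
          exact_mod_cast congrArg (Nat.cast (R := ℚ)) h
        field_simp
        linarith [hq]
      calc rVal K M (k+1) = rVal K M k * ((x - ((k:ℚ)+1))/((k:ℚ)+1)) := hstep
        _ ≤ ((g-1).choose k : ℚ) * (((g:ℚ)-1-(k:ℚ))/((k:ℚ)+1)) :=
            mul_le_mul hrk hfle hfnn (Nat.cast_nonneg _)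
        _ = ((g-1).choose (k+1) : ℚ) := hchooseQ.symm
  set S := ∑ k ∈ Finset.Icc 1 (g-1), rVal K M k * ((N:ℚ)-1)^k with hSdef
  have hSnn : 0 ≤ S := by
    rw [hSdef]
    apply Finset.sum_nonneg
    intro k hk
    rw [Finset.mem_Icc] at hk
    exact mul_nonneg (rpos k hk.2).le (pow_nonneg (by linarith) k)
  have hIco : Finset.Ico 1 g = Finset.Icc 1 (g-1) := by
    rw [← Finset.Ico_add_one_right_eq_Icc]
    congr 1
    omega
  have hsplit : ∑ k ∈ Finset.range g, rVal K M k * ((N:ℚ)-1)^k = 1 + S := by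
    rw [Finset.range_eq_Ico, Finset.sum_eq_sum_Ico_succ_bot (by omega : 0 < g), hSdef, hIco]
    simp [rVal]
  have hbin : ∑ k ∈ Finset.range g, ((g-1).choose k : ℚ) * ((N:ℚ)-1)^k = (N:ℚ)^(g-1) := by
    have h := add_pow ((N:ℚ)-1) 1 (g-1)
    simp only [one_pow, mul_one] at h
    rw [show (g-1)+1 = g by omega] at h
    have h2 : ∑ k ∈ Finset.range g, ((g-1).choose k : ℚ) * ((N:ℚ)-1)^k
        = (((N:ℚ)-1)+1)^(g-1) := by
      rw [h]
      exact Finset.sum_congr rfl (fun k _ => by ring)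
    rw [h2]
    congr 1
    ring
  have hcompare : ∑ k ∈ Finset.range g, rVal K M k * ((N:ℚ)-1)^k
      ≤ ∑ k ∈ Finset.range g, ((g-1).choose k : ℚ) * ((N:ℚ)-1)^k := by
    apply Finset.sum_le_sum
    intro k hk
    rw [Finset.mem_range] at hk
    exact mul_le_mul_of_nonneg_right (rbound k (by omega)) (pow_nonneg (by linarith) k)
  have hSum : 1 + S ≤ (N:ℚ)^(g-1) := by
    calc 1 + S = ∑ k ∈ Finset.range g, rVal K M k * ((N:ℚ)-1)^k := hsplit.symm
      _ ≤ ∑ k ∈ Finset.range g, ((g-1).choose k : ℚ) * ((N:ℚ)-1)^k := hcompare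
      _ = (N:ℚ)^(g-1) := hbin
  have h1S : (0:ℚ) < 1 + S := by linarith
  have hP0 : P0Val N K M = (1+S)⁻¹ := by
    rw [P0Val, hSdef, ← hgdef]
  have hP0le1 : (1+S)⁻¹ ≤ 1 := by
    rw [inv_le_one_iff₀]
    right; linarith
  have hP0pos : 0 < (1+S)⁻¹ := inv_pos.mpr h1S
  have hden2 : 0 < (N:ℚ) - P0Val N K M := by
    rw [hP0]; linarith
  have hNg : (1:ℚ) < (N:ℚ)^g := by
    apply one_lt_pow₀ (by linarith) (by omega)
  have hden1 : 0 < (N:ℚ)^g - 1 := by linarith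
  have hkey : 1 ≤ (1+S)⁻¹ * (N:ℚ)^(g-1) := by
    rw [inv_mul_eq_div, le_div_iff₀ h1S, one_mul]
    exact hSum
  rw [ge_iff_le, RstarVal, RVal, ← hgdef, div_le_div_iff₀ hden1 hden2, hP0]
  have e1 : (N:ℚ)^g = (N:ℚ)^(g-1) * N := by
    rw [← pow_succ]
    congr 1
    omega
  rw [e1]
  nlinarith [mul_nonneg (by linarith : (0:ℚ) ≤ (N:ℚ)-1)
    (by linarith [hkey] : (0:ℚ) ≤ (1+S)⁻¹ * (N:ℚ)^(g-1) - 1)]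
end

section
/- For all integers N > 1, K > 1, and M with 1 ≤ M ≤ K−1, if M+1 divides K, then R = R*, where R := (N−1)/(N − P_0) with P_0 := (1 + ∑_{k=1}^{g−1} r_k (N−1)^k)^{−1}, and R* := (N^g − N^{g−1})/(N^g − 1). -/
open Finset

/-!
When `M + 1 ∣ K` the quotient `K / (M + 1) = g` is a positive integer, so
`r_k = ∏_{j ≤ k} (g - j) / j` is the binomial coefficient `C(g - 1, k)` and the binomial theorem
collapses `1 + ∑ r_k (N - 1)^k` to `N^(g - 1)`. Hence `P_0 = N^(1 - g)`, and multiplying numerator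
and denominator of `R = (N - 1) / (N - N^(1 - g))` by `N^(g - 1)` gives `R*`.
-/

open Nat

theorem prod_Icc_sub_div_eq_descPochhammer_div {F : Type*} [Field F] [CharZero F]
    (x : F) (k : ℕ) :
    ∏ j ∈ Icc 1 k, (x - j) / j = (descPochhammer F k).eval (x - 1) / k ! := by
  induction k with
  | zero => simp
  | succ k ih =>
    rw [prod_Icc_succ_top (Nat.le_add_left 1 k), ih, descPochhammer_succ_eval,
      Nat.factorial_succ]
    push_cast
    field_simp
    ring

theorem sub_one_div_sub_inv_pow {F : Type*} [Field F] (x : F) (n : ℕ) :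
    (x - 1) / (x - (x ^ n)⁻¹) = (x ^ (n + 1) - x ^ n) / (x ^ (n + 1) - 1) := by
  rcases eq_or_ne (x ^ n) 0 with hx | hx
  · obtain rfl : x = 0 := pow_eq_zero_iff'.mp hx |>.1
    simp [hx, pow_succ]
  · rw [← mul_div_mul_left (x - 1) _ hx]
    congr 1 <;> field_simp <;> ring

theorem one_add_sum_Icc_choose_mul_pow {R : Type*} [CommSemiring R] (y : R) (n : ℕ) :
    1 + ∑ k ∈ Icc 1 n, (n.choose k : R) * y ^ k = (y + 1) ^ n := by
  rw [add_pow, range_eq_Ico, sum_eq_sum_Ico_succ_bot n.succ_pos,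
    Nat.succ_eq_add_one, Ico_add_one_right_eq_Icc]
  simp [mul_comm]

section Quotient

variable {N K M n : ℕ}

theorem gVal_eq (h : (K : ℚ) / (M + 1) = n + 1) : gVal K M = n + 1 := by
  rw [gVal, h]; exact_mod_cast Nat.ceil_natCast (n + 1)

theorem rVal_eq_choose (h : (K : ℚ) / (M + 1) = n + 1) (k : ℕ) : rVal K M k = n.choose k := by
  rw [rVal, h, prod_Icc_sub_div_eq_descPochhammer_div, add_sub_cancel_right,
    cast_choose_eq_descPochhammer_div]

theorem P0Val_eq_inv_pow (h : (K : ℚ) / (M + 1) = n + 1) : P0Val N K M = ((N : ℚ) ^ n)⁻¹ := by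
  simp_rw [P0Val, gVal_eq h, Nat.add_sub_cancel, rVal_eq_choose h,
    one_add_sum_Icc_choose_mul_pow, sub_add_cancel]

end Quotient

theorem exists_div_eq_succ_of_dvd {K d : ℕ} (hK : 0 < K) (hdvd : d ∣ K) :
    ∃ n : ℕ, (K : ℚ) / d = n + 1 := by
  obtain ⟨m, rfl⟩ := hdvd
  obtain ⟨n, rfl⟩ := Nat.exists_eq_add_one_of_ne_zero (Nat.pos_of_mul_pos_left hK).ne'
  refine ⟨n, ?_⟩
  have : (d : ℚ) ≠ 0 := by exact_mod_cast (Nat.pos_of_mul_pos_right hK).ne'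
  push_cast
  field_simp

theorem rate_eq_Rstar_of_dvd_general (N K M : ℕ) (hK : 1 < K) (hdvd : (M + 1) ∣ K) :
    RVal N K M = RstarVal N K M := by
  obtain ⟨n, hn⟩ := exists_div_eq_succ_of_dvd (Nat.zero_lt_of_lt hK) hdvd
  push_cast at hn
  rw [RVal, RstarVal, P0Val_eq_inv_pow hn, gVal_eq hn, Nat.add_sub_cancel]
  exact sub_one_div_sub_inv_pow (N : ℚ) n

/-- if `M+1` divides `K` then `R = R*`. -/
theorem rate_eq_Rstar_of_dvd (N K M : ℕ) (hN : 1 < N) (hK : 1 < K)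
    (hM1 : 1 ≤ M) (hM2 : M ≤ K - 1) (hdvd : (M + 1) ∣ K) :
    RVal N K M = RstarVal N K M :=
  rate_eq_Rstar_of_dvd_general N K M hK hdvd
end

section
/- For all integers N > 1, K > 1, and M with 1 ≤ M ≤ K−1, if M+1 does not divide K, then R > R*, where R := (N−1)/(N − P_0) with P_0 := (1 + ∑_{k=1}^{g−1} r_k (N−1)^k)^{−1}, and R* := (N^g − N^{g−1})/(N^g − 1). -/
open Finset

/-!
Write `x = K/(M+1)`, so that `g = ⌈x⌉` and `r_k = ∏_{j=1}^k (x - j)/j` is the binomial coefficient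
`C(x - 1, k)`. Clearing denominators, `R > R*` amounts to
`1/P_0 = ∑_{k<g} r_k (N-1)^k < N^(g-1) = ∑_{k<g} C(g-1, k) (N-1)^k`.
Since `M + 1 ∤ K`, `x` is not an integer, so `g - 1 < x < g`. For `k ≤ g - 1` each factor `(x - j)/j`
of `r_k` is then positive and below the matching factor `(g - j)/j` of `C(g-1, k)`, and `g ≥ 2`
because `x > 1`, so the `k = 1` terms already differ.
-/

section GeneralizedBinomial

variable {𝕜 : Type*} [Field 𝕜]

theorem Nat.cast_choose_eq_prod_Icc [CharZero 𝕜] {n k : ℕ} (hk : k ≤ n) :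
    (n.choose k : 𝕜) = ∏ j ∈ Icc 1 k, ((n : 𝕜) + 1 - j) / j := by
  induction k with
  | zero => simp
  | succ k ih =>
    rw [prod_Icc_succ_top (by omega), ← ih (by omega)]
    have hrec : (n.choose (k + 1) : 𝕜) * (k + 1) = n.choose k * (n - k) := by
      rw [← Nat.cast_sub (by omega)]
      exact_mod_cast Nat.choose_succ_right_eq n k
    field_simp
    push_cast
    linear_combination hrec

variable [LinearOrder 𝕜] [IsStrictOrderedRing 𝕜]

theorem sub_div_pos_of_mem_Icc {x : 𝕜} {j k : ℕ} (hj : j ∈ Icc 1 k) (hkx : (k : 𝕜) < x) :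
    0 < (x - j) / j := by
  obtain ⟨hj1, hjk⟩ := mem_Icc.1 hj
  have : (j : 𝕜) ≤ k := by exact_mod_cast hjk
  exact div_pos (by linarith) (by positivity)

theorem prod_Icc_sub_div_le_choose {x : 𝕜} {n k : ℕ} (hkn : k ≤ n) (hkx : (k : 𝕜) < x)
    (hxn : x ≤ n + 1) : ∏ j ∈ Icc 1 k, (x - j) / j ≤ n.choose k := by
  rw [Nat.cast_choose_eq_prod_Icc hkn]
  refine prod_le_prod (fun j hj => (sub_div_pos_of_mem_Icc hj hkx).le) fun j hj => ?_
  exact div_le_div_of_nonneg_right (by linarith) (Nat.cast_nonneg j)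

theorem sum_Icc_prod_Icc_sub_div_mul_pow_nonneg {x t : 𝕜} {n : ℕ} (hnx : (n : 𝕜) < x)
    (ht : 0 ≤ t) : 0 ≤ ∑ k ∈ Icc 1 n, (∏ j ∈ Icc 1 k, (x - j) / j) * t ^ k := by
  refine sum_nonneg fun k hk => mul_nonneg (prod_nonneg fun j hj => ?_) (pow_nonneg ht k)
  have : (k : 𝕜) ≤ n := by exact_mod_cast (mem_Icc.1 hk).2
  exact (sub_div_pos_of_mem_Icc hj (by linarith)).le

theorem one_add_sum_Icc_prod_Icc_sub_div_mul_pow_lt {x t : 𝕜} {n : ℕ} (hn : 1 ≤ n)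
    (hnx : (n : 𝕜) < x) (hxn : x < n + 1) (ht : 0 < t) :
    1 + ∑ k ∈ Icc 1 n, (∏ j ∈ Icc 1 k, (x - j) / j) * t ^ k < (1 + t) ^ n := by
  have hsum : 1 + ∑ k ∈ Icc 1 n, (∏ j ∈ Icc 1 k, (x - j) / j) * t ^ k
      = ∑ k ∈ range (n + 1), (∏ j ∈ Icc 1 k, (x - j) / j) * t ^ k := by
    rw [sum_range_eq_add_Ico _ (Nat.succ_pos n), Nat.succ_eq_add_one, Ico_add_one_right_eq_Icc]
    simp
  rw [hsum, add_comm 1 t, add_pow]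
  apply sum_lt_sum
  · intro k hk
    have hkn : k ≤ n := Nat.lt_succ_iff.1 (mem_range.1 hk)
    have : (k : 𝕜) ≤ n := by exact_mod_cast hkn
    rw [one_pow, mul_one, mul_comm (t ^ k)]
    exact mul_le_mul_of_nonneg_right (prod_Icc_sub_div_le_choose hkn (by linarith) hxn.le)
      (pow_nonneg ht.le k)
  · refine ⟨1, mem_range.2 (by omega), ?_⟩
    simp only [Icc_self, prod_singleton, Nat.cast_one, div_one, pow_one, one_pow, mul_one,
      Nat.choose_one_right]
    rw [mul_comm t]
    exact mul_lt_mul_of_pos_right (by linarith) ht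

theorem pow_succ_sub_pow_div_lt_sub_one_div_sub_inv {N S : 𝕜} {n : ℕ} (hN : 1 < N) (hS : 1 ≤ S)
    (hSN : S < N ^ n) : (N ^ (n + 1) - N ^ n) / (N ^ (n + 1) - 1) < (N - 1) / (N - S⁻¹) := by
  have hSinv : S⁻¹ ≤ 1 := inv_le_one_of_one_le₀ hS
  have hNn : 1 < N ^ n * S⁻¹ := by
    rwa [← div_eq_mul_inv, one_lt_div (by linarith)]
  have hNn1 : 1 < N ^ (n + 1) := one_lt_pow₀ hN n.succ_ne_zero
  rw [div_lt_div_iff₀ (by linarith) (by linarith), pow_succ]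
  nlinarith [mul_pos (sub_pos.2 hN) (sub_pos.2 hNn)]

end GeneralizedBinomial

theorem natCast_div_succ_ne_natCast {K M : ℕ} (h : ¬ (M + 1) ∣ K) (n : ℕ) :
    (K : ℚ) / (M + 1) ≠ n := by
  intro hn
  rw [div_eq_iff (by positivity)] at hn
  exact h ⟨n, by rw [mul_comm]; exact_mod_cast hn⟩

theorem rate_gt_Rstar_of_not_dvd_general (N K M : ℕ) (hN : 1 < N)
    (hM2 : M ≤ K - 1) (hndvd : ¬ (M + 1) ∣ K) :
    RVal N K M > RstarVal N K M := by
  have hK : K ≠ 0 := by rintro rfl; exact hndvd (dvd_zero _)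
  have hMK : M + 1 < K := lt_of_le_of_ne (by omega) fun h => hndvd (h ▸ dvd_rfl)
  have hx1 : 1 < (K : ℚ) / (M + 1) := by
    rw [one_lt_div (by positivity)]; exact_mod_cast hMK
  obtain ⟨n, hg⟩ : ∃ n, gVal K M = n + 1 :=
    Nat.exists_eq_succ_of_ne_zero (Nat.ceil_pos.2 (by linarith)).ne'
  obtain ⟨hnx, hxn⟩ := (Nat.ceil_eq_iff n.succ_ne_zero).1 hg
  push_cast at hnx hxn
  have hxn' : (K : ℚ) / (M + 1) < n + 1 :=
    lt_of_le_of_ne hxn (by exact_mod_cast natCast_div_succ_ne_natCast hndvd (n + 1))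
  have hn : 1 ≤ n := Nat.cast_pos.1 (by linarith : (0 : ℚ) < n)
  have hN' : (1 : ℚ) < N := by exact_mod_cast hN
  have hS := one_add_sum_Icc_prod_Icc_sub_div_mul_pow_lt (t := (N : ℚ) - 1) hn hnx hxn'
    (by linarith)
  rw [add_sub_cancel] at hS
  rw [gt_iff_lt, RstarVal, RVal, P0Val, hg, add_tsub_cancel_right]
  exact pow_succ_sub_pow_div_lt_sub_one_div_sub_inv hN'
    (le_add_of_nonneg_right (sum_Icc_prod_Icc_sub_div_mul_pow_nonneg hnx (by linarith))) hS

/-- if `M+1` does not divide `K` then `R > R*`. -/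
theorem rate_gt_Rstar_of_not_dvd (N K M : ℕ) (hN : 1 < N) (hK : 1 < K)
    (hM1 : 1 ≤ M) (hM2 : M ≤ K - 1) (hndvd : ¬ (M + 1) ∣ K) :
    RVal N K M > RstarVal N K M :=
  rate_gt_Rstar_of_not_dvd_general N K M hN hM2 hndvd
end

section
/- For all integers M ≥ 1, j ≥ 1, and K with K ≥ (j+1)(M+1), the following identity of rational numbers holds: [C(j(M+1)−1, M) · C(K−M−1, j(M+1))] / [C(K−M−1, (j−1)(M+1)) · C(K−1−j(M+1), M)] = (K − j(M+1)) / (j(M+1)), where C(n, m) denotes the binomial coefficient. -/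
/-!
Write `j (M + 1) = p + M + 1` and `K = p + 2 (M + 1) + s`. Clearing denominators, the identity
becomes `C(p+M, M) C(n, p+M+1) (p+M+1) = C(n, p) C(M+s, M) (M+s+1)` with `n = p + M + 1 + s`.
The absorption identity `(k+1) C(k, M) = C(k+1, M+1) (M+1)` turns both sides into multiples of
`M + 1`, and the remaining products `C(n, p+M+1) C(p+M+1, p) = C(n, p) C(M+s+1, M+1)` agree by
counting nested subsets (`Nat.choose_mul`).
-/

theorem Nat.choose_mul_choose_mul_add_one (p m s : ℕ) :
    (p + m).choose m * (p + m + 1 + s).choose (p + m + 1) * (p + m + 1) =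
      (p + m + 1 + s).choose p * (m + s).choose m * (m + s + 1) := by
  have hsplit : (p + m + 1 + s).choose (p + m + 1) * (p + m + 1).choose (m + 1) =
      (p + m + 1 + s).choose p * (m + s + 1).choose (m + 1) := by
    have h := Nat.choose_mul (n := p + m + 1 + s) (k := p + m + 1) (Nat.le_add_right p (m + 1))
    have hsymm : (p + m + 1).choose (m + 1) = (p + m + 1).choose p := by
      rw [Nat.add_assoc]; exact Nat.choose_symm_add.symm
    rwa [show p + m + 1 + s - p = m + s + 1 by omega, show p + m + 1 - p = m + 1 by omega,
      ← hsymm] at h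
  calc _ = (p + m + 1 + s).choose (p + m + 1) * ((p + m + 1) * (p + m).choose m) := by ring
    _ = (p + m + 1 + s).choose p * (m + s + 1).choose (m + 1) * (m + 1) := by
      rw [Nat.add_one_mul_choose_eq, ← mul_assoc, hsplit]
    _ = _ := by rw [mul_assoc, ← Nat.add_one_mul_choose_eq]; ring

theorem choose_ratio_eq_general (M j K : ℕ) (hj : 1 ≤ j)
    (hK : (j + 1) * (M + 1) ≤ K) :
    ((Nat.choose (j * (M + 1) - 1) M : ℚ) * (Nat.choose (K - M - 1) (j * (M + 1)) : ℚ)) /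
        ((Nat.choose (K - M - 1) ((j - 1) * (M + 1)) : ℚ) *
          (Nat.choose (K - 1 - j * (M + 1)) M : ℚ))
      = ((K : ℚ) - (j : ℚ) * ((M : ℚ) + 1)) / ((j : ℚ) * ((M : ℚ) + 1)) := by
  obtain ⟨i, rfl⟩ := Nat.exists_eq_add_of_le' hj
  obtain ⟨s, rfl⟩ := Nat.exists_eq_add_of_le' hK
  set p := i * (M + 1) with hp
  have ha : (i + 1) * (M + 1) = p + M + 1 := by ring
  have hK' : s + (i + 1 + 1) * (M + 1) = p + M + 1 + s + (M + 1) := by ring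
  rw [ha, hK', Nat.add_one_sub_one i, ← hp, show p + M + 1 - 1 = p + M by omega,
    show p + M + 1 + s + (M + 1) - M - 1 = p + M + 1 + s by omega,
    show p + M + 1 + s + (M + 1) - 1 - (p + M + 1) = M + s by omega]
  have hnum :
      ((p + M + 1 + s + (M + 1) : ℕ) : ℚ) - ((i + 1 : ℕ) : ℚ) * ((M : ℚ) + 1) = M + s + 1 := by
    rw [hp]; push_cast; ring
  have hden : ((i + 1 : ℕ) : ℚ) * ((M : ℚ) + 1) = ((p + M + 1 : ℕ) : ℚ) := by
    rw [hp]; push_cast; ring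
  have hchoose : ((p + M + 1 + s).choose p * (M + s).choose M : ℚ) ≠ 0 := by
    norm_cast
    exact mul_ne_zero (Nat.choose_ne_zero (by omega)) (Nat.choose_ne_zero (by omega))
  rw [hnum, hden, div_eq_div_iff hchoose (by positivity)]
  exact_mod_cast (Nat.choose_mul_choose_mul_add_one p M s).trans (mul_comm _ _)

/-- the single-factor binomial-coefficient identity
    `[C(j(M+1)−1, M) · C(K−M−1, j(M+1))] / [C(K−M−1, (j−1)(M+1)) · C(K−1−j(M+1), M)]
      = (K − j(M+1)) / (j(M+1))`. -/
theorem choose_ratio_eq (M j K : ℕ) (hM : 1 ≤ M) (hj : 1 ≤ j)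
    (hK : (j + 1) * (M + 1) ≤ K) :
    ((Nat.choose (j * (M + 1) - 1) M : ℚ) * (Nat.choose (K - M - 1) (j * (M + 1)) : ℚ)) /
        ((Nat.choose (K - M - 1) ((j - 1) * (M + 1)) : ℚ) *
          (Nat.choose (K - 1 - j * (M + 1)) M : ℚ))
      = ((K : ℚ) - (j : ℚ) * ((M : ℚ) + 1)) / ((j : ℚ) * ((M : ℚ) + 1)) :=
  choose_ratio_eq_general M j K hj hK
end

section
/- For all integers M ≥ 1, k ≥ 1, and K with K ≥ (k+1)(M+1), the following identity of rational numbers holds: ∏_{j=1}^{k} [C(j(M+1)−1, M) · C(K−M−1, j(M+1))] / [C(K−M−1, (j−1)(M+1)) · C(K−1−j(M+1), M)] = ∏_{j=1}^{k} (K/(M+1) − j)/j, where C(n, m) denotes the binomial coefficient and K/(M+1) denotes the exact rational quotient. -/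
/-!
Writing `b = (j - 1)(M + 1)` and `c = K - (j + 1)(M + 1)`, the `j`-th factor is
`C(M+b, M) C(N, M+b+1) / (C(N, b) C(M+c, M))` with `N = M + b + c + 1`. Both
`(M+b+1) C(M+b, M) C(N, M+b+1)` and `(M+c+1) C(M+c, M) C(N, b)` equal the multinomial
coefficient `N! / (M! b! c!)`, so the factor is `(M+c+1)/(M+b+1) = (K - j(M+1))/(j(M+1))`.
-/

namespace Nat

theorem add_succ_mul_choose_mul_choose (m b c : ℕ) :
    (m + b + 1) * (m + b).choose m * (m + b + c + 1).choose (m + b + 1)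
      = (m + b + c + 1).choose (m + 1) * (b + c).choose b * (m + 1) := by
  have hsub : m + b + c + 1 - (m + 1) = b + c := by omega
  have hsub' : m + b + 1 - (m + 1) = b := by omega
  rw [add_one_mul_choose_eq, mul_right_comm, mul_comm (choose _ _),
    choose_mul (by omega), hsub, hsub']

end Nat

theorem choose_mul_choose_div_choose_mul_choose (m b c : ℕ) :
    ((m + b).choose m * (m + b + c + 1).choose (m + b + 1) : ℚ)
        / ((m + b + c + 1).choose b * (m + c).choose m)
      = ((m : ℚ) + c + 1) / ((m : ℚ) + b + 1) := by
  have hb := Nat.add_succ_mul_choose_mul_choose m b c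
  have hc := Nat.add_succ_mul_choose_mul_choose m c b
  rw [show m + c + b + 1 = m + b + c + 1 by ring,
    (Nat.choose_symm_add : (c + b).choose c = _), add_comm c b,
    Nat.choose_symm_of_eq_add (show m + b + c + 1 = m + c + 1 + b by ring), ← hb] at hc
  have hpos : (0 : ℚ) < (m + b + c + 1).choose b * (m + c).choose m := by
    have := Nat.choose_pos (show b ≤ m + b + c + 1 by omega)
    have := Nat.choose_pos (show m ≤ m + c by omega)
    positivity
  rw [div_eq_div_iff hpos.ne' (by positivity)]
  qify at hc
  linear_combination -hc

theorem choose_ratio_factor_eq (M K j : ℕ) (hj : 1 ≤ j) (hjK : (j + 1) * (M + 1) ≤ K) :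
    ((Nat.choose (j * (M + 1) - 1) M : ℚ) * (Nat.choose (K - M - 1) (j * (M + 1)) : ℚ)) /
        ((Nat.choose (K - M - 1) ((j - 1) * (M + 1)) : ℚ) *
          (Nat.choose (K - 1 - j * (M + 1)) M : ℚ))
      = ((K : ℚ) / ((M : ℚ) + 1) - (j : ℚ)) / (j : ℚ) := by
  obtain ⟨i, rfl⟩ : ∃ i, j = i + 1 := ⟨j - 1, by omega⟩
  obtain ⟨c, rfl⟩ := Nat.exists_eq_add_of_le hjK
  set b := i * (M + 1)
  have hb : (i + 1) * (M + 1) = M + b + 1 := by rw [add_one_mul]; ring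
  have hK : (i + 1 + 1) * (M + 1) + c = M + b + c + 1 + (M + 1) := by rw [add_one_mul, hb]; ring
  rw [hb, hK, add_tsub_cancel_right, add_tsub_cancel_right,
    show M + b + c + 1 + (M + 1) - M - 1 = M + b + c + 1 by omega,
    show M + b + c + 1 + (M + 1) - 1 - (M + b + 1) = M + c by omega, choose_mul_choose_div_choose_mul_choose]
  push_cast [hK, b]
  field_simp
  ring

theorem prod_choose_ratio_eq_general (M k K : ℕ)
    (hK : (k + 1) * (M + 1) ≤ K) :
    ∏ j ∈ Finset.Icc 1 k,
        ((Nat.choose (j * (M + 1) - 1) M : ℚ) *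
            (Nat.choose (K - M - 1) (j * (M + 1)) : ℚ)) /
          ((Nat.choose (K - M - 1) ((j - 1) * (M + 1)) : ℚ) *
            (Nat.choose (K - 1 - j * (M + 1)) M : ℚ))
      = ∏ j ∈ Finset.Icc 1 k, ((K : ℚ) / ((M : ℚ) + 1) - (j : ℚ)) / (j : ℚ) := by
  refine Finset.prod_congr rfl fun j hj => ?_
  obtain ⟨hj1, hjk⟩ := Finset.mem_Icc.mp hj
  exact choose_ratio_factor_eq M K j hj1
    ((Nat.mul_le_mul_right _ (Nat.succ_le_succ hjk)).trans hK)

/-- the product of the binomial-coefficient ratios collapses to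
    `∏_{j=1}^{k} (K/(M+1) − j)/j`. -/
theorem prod_choose_ratio_eq (M k K : ℕ) (hM : 1 ≤ M) (hk : 1 ≤ k)
    (hK : (k + 1) * (M + 1) ≤ K) :
    ∏ j ∈ Finset.Icc 1 k,
        ((Nat.choose (j * (M + 1) - 1) M : ℚ) *
            (Nat.choose (K - M - 1) (j * (M + 1)) : ℚ)) /
          ((Nat.choose (K - M - 1) ((j - 1) * (M + 1)) : ℚ) *
            (Nat.choose (K - 1 - j * (M + 1)) M : ℚ))
      = ∏ j ∈ Finset.Icc 1 k, ((K : ℚ) / ((M : ℚ) + 1) - (j : ℚ)) / (j : ℚ) :=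
  prod_choose_ratio_eq_general M k K hK
end
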